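/- arXiv:0803.3563 — 2 statements merged into one kernel-verified Lean document; each statement's English description precedes it below -/
import Mathlib

section
/- Let R be a commutative ring, M an R-module, N an R-module, and φ : M ⊗ N → R a surjective R-linear map. Then for every prime ideal p of R there exists s ∈ R \ p such that the localized module M_s has R_s as a direct summand, i.e. there is a surjective R_s-linear map M_s → R_s admitting a section. -/
open TensorProduct

/-- If `φ : M ⊗ N → R` is surjective, then for every prime ideal `p` of `R`
there is `s ∉ p` such that `R_s` is a direct summand of `M_s`: there is a
surjective `R_s`-linear map `M_s → R_s` admitting a section. -/
theorem exists_localization_invertible_summand (R M N : Type*) [CommRing R]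
    [AddCommGroup M] [Module R M] [AddCommGroup N] [Module R N]
    (φ : M ⊗[R] N →ₗ[R] R) (hφ : Function.Surjective φ)
    (p : Ideal R) (hp : p.IsPrime) :
    ∃ s : R, s ∉ p ∧
      ∃ (ψ : LocalizedModule (Submonoid.powers s) M →ₗ[Localization (Submonoid.powers s)]
            Localization (Submonoid.powers s))
        (σ : Localization (Submonoid.powers s) →ₗ[Localization (Submonoid.powers s)]
            LocalizedModule (Submonoid.powers s) M),
        Function.Surjective ψ ∧ ψ ∘ₗ σ = LinearMap.id := by
  obtain ⟨x, hx⟩ := hφ 1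
  obtain ⟨t, rfl⟩ := TensorProduct.exists_finset x
  -- some term of the sum is not in p
  have hsum : ∑ i ∈ t, φ (i.1 ⊗ₜ[R] i.2) = 1 := by
    rw [← map_sum]; exact hx
  have : ∃ i ∈ t, φ (i.1 ⊗ₜ[R] i.2) ∉ p := by
    by_contra h
    push_neg at h
    have : (1 : R) ∈ p := hsum ▸ Ideal.sum_mem p h
    exact hp.ne_top (Ideal.eq_top_of_isUnit_mem p this isUnit_one)
  obtain ⟨i, hi, hs⟩ := this
  set m : M := i.1
  set n : N := i.2
  refine ⟨φ (m ⊗ₜ[R] n), hs, ?_⟩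
  set s : R := φ (m ⊗ₜ[R] n) with hs_def
  set S : Submonoid R := Submonoid.powers s
  set A := Localization S
  -- the linear map `g : M →ₗ[R] R`, `x ↦ φ (x ⊗ n)`
  set g : M →ₗ[R] R := φ ∘ₗ ((TensorProduct.mk R M N).flip n) with hg
  set ψ : LocalizedModule S M →ₗ[A] A :=
    (IsLocalizedModule.map S (LocalizedModule.mkLinearMap S M)
      (Algebra.linearMap R A) g).extendScalarsOfIsLocalization S A with hψ
  have hψmk : ∀ y : M, ψ (LocalizedModule.mk y 1) = algebraMap R A (g y) := by
    intro y
    have := IsLocalizedModule.map_apply S (LocalizedModule.mkLinearMap S M)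
      (Algebra.linearMap R A) g y
    simpa [ψ, LocalizedModule.mkLinearMap_apply] using this
  have hu : IsUnit (algebraMap R A s) :=
    IsLocalization.map_units A ⟨s, Submonoid.mem_powers s⟩
  obtain ⟨v, hv⟩ := hu
  set σ : A →ₗ[A] LocalizedModule S M :=
    LinearMap.toSpanSingleton A _ (((v⁻¹ : Aˣ) : A) • LocalizedModule.mk m 1) with hσ
  have hcomp : ψ ∘ₗ σ = LinearMap.id := by
    apply LinearMap.ext
    intro r
    have hgm : g m = s := by simp [g, s, TensorProduct.mk]
    simp only [LinearMap.comp_apply, σ, LinearMap.toSpanSingleton_apply, LinearMap.id_apply,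
      map_smul, hψmk m, hgm, ← hv, smul_eq_mul, Units.inv_mul, mul_one]

  exact ⟨ψ, σ, fun r => ⟨σ r, LinearMap.congr_fun hcomp r⟩, hcomp⟩
end

section
/- In a Grothendieck abelian category C with generator U, an object I is injective if and only if for every subobject U' ⊆ U, every morphism U' → I extends to U → I (Baer's criterion in Grothendieck categories). -/
/-!
Every monomorphism of a Grothendieck abelian category is a transfinite composition of pushouts
of inclusions of subobjects of a separator, so a morphism with the right lifting property against
those inclusions has it against all monomorphisms. For `I ⟶ 0` these lifting properties are
exactly the extension properties of `I` along the respective monomorphisms.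
-/

open CategoryTheory CategoryTheory.Limits

universe v u

variable {C : Type u} [Category.{v} C]

lemma hasLiftingProperty_iff_of_isZero [HasZeroMorphisms C] {A B I Z : C} (i : A ⟶ B)
    (p : I ⟶ Z) (hZ : IsZero Z) :
    HasLiftingProperty i p ↔ ∀ f : A ⟶ I, ∃ g : B ⟶ I, i ≫ g = f := by
  refine ⟨fun _ f => ?_, fun hext => ⟨fun {f _} _ => ?_⟩⟩
  · have sq : CommSq f i p 0 := ⟨hZ.eq_of_tgt _ _⟩
    exact ⟨sq.lift, sq.fac_left⟩
  · obtain ⟨g, hg⟩ := hext f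
    exact ⟨⟨{ l := g, fac_left := hg, fac_right := hZ.eq_of_tgt _ _ }⟩⟩

lemma IsGrothendieckAbelian.rlp_generatingMonomorphisms_iff {G X Y : C} (p : X ⟶ Y) :
    (IsGrothendieckAbelian.generatingMonomorphisms G).rlp p ↔
      ∀ G' : Subobject G, HasLiftingProperty G'.arrow p :=
  ⟨fun hp G' => hp _ ⟨G'⟩, by rintro h _ _ _ ⟨G'⟩; exact h G'⟩

lemma IsGrothendieckAbelian.of_isSeparator [Abelian C] [HasFilteredColimits C] [AB5 C]
    {G : C} (hG : IsSeparator G) : IsGrothendieckAbelian.{v} C where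
  hasSeparator := ⟨⟨G, hG⟩⟩

theorem injective_iff_extends_from_subobjects_of_separator_general
    {C : Type*} [Category C] [Abelian C]
    [HasFilteredColimits C] [AB5 C]
    (U : C) (hU : IsSeparator U) (I : C) :
    Injective I ↔
      ∀ (U' : Subobject U) (f : (U' : C) ⟶ I),
        ∃ g : U ⟶ I, U'.arrow ≫ g = f := by
  have := IsGrothendieckAbelian.of_isSeparator hU
  rw [injective_iff_rlp_monomorphisms_zero,
    ← IsGrothendieckAbelian.generatingMonomorphisms_rlp hU,
    IsGrothendieckAbelian.rlp_generatingMonomorphisms_iff]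
  exact forall_congr' fun U' => hasLiftingProperty_iff_of_isZero _ _ (isZero_zero C)

/-- Baer's criterion in a Grothendieck abelian category with generator `U`:
an object `I` is injective if and only if every morphism `U' → I` from a
subobject `U' ⊆ U` extends to `U`. -/
theorem injective_iff_extends_from_subobjects_of_separator
    {C : Type*} [Category C] [Abelian C] [HasColimits C]
    [HasFilteredColimits C] [AB5 C]
    (U : C) (hU : IsSeparator U) (I : C) :
    Injective I ↔
      ∀ (U' : Subobject U) (f : (U' : C) ⟶ I),
        ∃ g : U ⟶ I, U'.arrow ≫ g = f :=
  injective_iff_extends_from_subobjects_of_separator_general U hU I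
end
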